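/- Let p be a prime and let (A,+,·) be a pre-Lie algebra over F_p generated as a pre-Lie algebra by one element x, with cardinality p^4 and A^4 = 0. Write x^2 = x·x. Then the elements x, x^2, x^2·x, x·x^2 form a basis of A as a vector space over F_p, and all products of more than 3 elements of A are zero. -/

import Mathlib

/-!
Every product of at least four elements lies in `A⁴ = 0`, so the span of `x, x², x²·x, x·x²`
is closed under the product: the only products of two of these vectors not forced to vanish
are `x·x`, `x²·x` and `x·x²`, which are again among them. Being a subalgebra containing `x`,
the span is all of `A`; as `A` has dimension `4`, the four spanning vectors form a basis.
-/

/-- A pre-Lie algebra structure over `ZMod p` on the `ZMod p`-module `A`: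
a bilinear multiplication satisfying the pre-Lie identity. -/
structure PreLie (p : ℕ) (A : Type) [AddCommGroup A] [Module (ZMod p) A] where
  mul : A → A → A
  add_mul : ∀ a b c, mul (a + b) c = mul a c + mul b c
  mul_add : ∀ a b c, mul a (b + c) = mul a b + mul a c
  smul_mul : ∀ (r : ZMod p) (a b : A), mul (r • a) b = r • mul a b
  mul_smul : ∀ (r : ZMod p) (a b : A), mul a (r • b) = r • mul a b
  prelie : ∀ a b c, mul (mul a b) c - mul a (mul b c) = mul (mul b a) c - mul b (mul a c)

/-- `IsProd m n x` : `x` is a product (in some order, with some bracketing) of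
`n` elements of `A` under the multiplication `m`. -/
inductive IsProd {A : Type} (m : A → A → A) : ℕ → A → Prop
  | of (a : A) : IsProd m 1 a
  | mul {j k : ℕ} {x y : A} : IsProd m j x → IsProd m k y → IsProd m (j + k) (m x y)

/-- `IsXProd m x n w` : `w` is a product (with some bracketing) of `n` copies of `x`. -/
inductive IsXProd {A : Type} (m : A → A → A) (x : A) : ℕ → A → Prop
  | of : IsXProd m x 1 x
  | mul {j k : ℕ} {w v : A} : IsXProd m x j w → IsXProd m x k v → IsXProd m x (j + k) (m w v)

variable {A : Type} [AddCommGroup A]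

/-- The span chain `Aⁿ` of a pre-Lie multiplication (`pchain p m n = Aⁿ` for `n ≥ 1`):
`A¹ = A`, `A^{i+1} = Σ_{j=1}^{i} A^j · A^{i+1-j}` (linear span). -/
def pchain (p : ℕ) [Module (ZMod p) A] (m : A → A → A) : ℕ → Submodule (ZMod p) A
  | 0 => ⊤
  | 1 => ⊤
  | n + 2 => Submodule.span (ZMod p)
      {x | ∃ j : Fin (n + 1), ∃ u ∈ pchain p m (j.1 + 1), ∃ v ∈ pchain p m (n + 1 - j.1),
        x = m u v}

/-- `e^{L_a}(b) = Σ_{n=0}^{k-1} (1/n!) L_a^n(b)`, where `L_a(y) = a · y`. -/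
def expL (p : ℕ) [Module (ZMod p) A] (m : A → A → A) (k : ℕ) (a b : A) : A :=
  ∑ n ∈ Finset.range k, ((Nat.factorial n : ZMod p))⁻¹ • ((fun y => m a y)^[n] b)

/-- `W(a) = a + Σ_{n=2}^{k} (1/n!) L_a^{n-1}(a)`. -/
def Wmap (p : ℕ) [Module (ZMod p) A] (m : A → A → A) (k : ℕ) (a : A) : A :=
  a + ∑ n ∈ Finset.range (k - 1),
      ((Nat.factorial (n + 2) : ZMod p))⁻¹ • ((fun y => m a y)^[n + 1] a)

/-- The group-of-flows multiplication `a ∘ b = a + e^{L_{Ω(a)}}(b)`, where `Ω`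
is the inverse of the bijection `W`. -/
noncomputable def flowCirc (p : ℕ) [Module (ZMod p) A] (m : A → A → A) (k : ℕ) (a b : A) : A :=
  a + expL p m k (@Function.invFun A A ⟨0⟩ (Wmap p m k) a) b

/-- Membership in the smallest sub-pre-Lie-algebra containing `x`. -/
inductive PreLieGen (p : ℕ) [Module (ZMod p) A] (m : A → A → A) (x : A) : A → Prop
  | base : PreLieGen p m x x
  | zero : PreLieGen p m x 0
  | add {a b : A} : PreLieGen p m x a → PreLieGen p m x b → PreLieGen p m x (a + b)
  | neg {a : A} : PreLieGen p m x a → PreLieGen p m x (-a)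
  | smul (r : ZMod p) {a : A} : PreLieGen p m x a → PreLieGen p m x (r • a)
  | mul {a b : A} : PreLieGen p m x a → PreLieGen p m x b → PreLieGen p m x (m a b)

section Chain

variable (p : ℕ) [Module (ZMod p) A] (m : A → A → A)

lemma pchain_succ_le (n : ℕ) : pchain p m (n + 1) ≤ pchain p m n := by
  induction n using Nat.strong_induction_on with
  | _ n ih =>
    match n with
    | 0 | 1 => simp [pchain]
    | n + 2 =>
      rw [pchain, pchain]
      refine Submodule.span_le.mpr ?_
      rintro _ ⟨j, u, hu, v, hv, rfl⟩
      by_cases hj : j.1 ≤ n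
      · have hv' : v ∈ pchain p m (n + 1 - j.1) :=
          ih _ (by omega) (by rwa [show n + 1 - j.1 + 1 = n + 1 + 1 - j.1 by omega])
        exact Submodule.subset_span ⟨⟨j.1, by omega⟩, u, hu, v, hv', rfl⟩
      · rw [show j.1 = n + 1 by omega] at hu
        refine Submodule.subset_span ⟨⟨n, by omega⟩, u, ih _ (by omega) hu, v, ?_, rfl⟩
        rw [show n + 1 - n = 1 by omega, pchain]
        exact Submodule.mem_top

lemma pchain_antitone : Antitone (pchain p m) :=
  antitone_nat_of_succ_le (pchain_succ_le p m)

variable {p m}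

lemma mul_mem_pchain {j k : ℕ} (hj : 1 ≤ j) (hk : 1 ≤ k) {u v : A}
    (hu : u ∈ pchain p m j) (hv : v ∈ pchain p m k) : m u v ∈ pchain p m (j + k) := by
  obtain ⟨j, rfl⟩ : ∃ j', j = j' + 1 := ⟨j - 1, by omega⟩
  obtain ⟨k, rfl⟩ : ∃ k', k = k' + 1 := ⟨k - 1, by omega⟩
  rw [show j + 1 + (k + 1) = j + k + 2 by omega, pchain]
  exact Submodule.subset_span
    ⟨⟨j, by omega⟩, u, hu, v, by rwa [show j + k + 1 - j = k + 1 by omega], rfl⟩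

lemma mul_eq_zero_of_pchain_eq_bot {n j k : ℕ} (hn : pchain p m n = ⊥) (hj : 1 ≤ j)
    (hk : 1 ≤ k) (hjk : n ≤ j + k) {u v : A} (hu : u ∈ pchain p m j)
    (hv : v ∈ pchain p m k) : m u v = 0 := by
  have h := pchain_antitone p m hjk (mul_mem_pchain hj hk hu hv)
  rwa [hn, Submodule.mem_bot] at h

lemma IsProd.one_le {α : Type} {m : α → α → α} {n : ℕ} {w : α} (h : IsProd m n w) : 1 ≤ n := by
  induction h with
  | of => rfl
  | mul => omega

lemma IsProd.mem_pchain {n : ℕ} {w : A} (h : IsProd m n w) : w ∈ pchain p m n := by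
  induction h with
  | of a => simp [pchain]
  | mul h₁ h₂ ih₁ ih₂ => exact mul_mem_pchain h₁.one_le h₂.one_le ih₁ ih₂

lemma IsProd.eq_zero_of_pchain_eq_bot {n k : ℕ} (hn : pchain p m n = ⊥) (hnk : n ≤ k)
    {w : A} (h : IsProd m k w) : w = 0 := by
  have hw := pchain_antitone p m hnk (h.mem_pchain (p := p))
  rwa [hn, Submodule.mem_bot] at hw

end Chain

lemma PreLieGen.mem_of_mul_mem {p : ℕ} [Module (ZMod p) A] {m : A → A → A} {x a : A}
    (h : PreLieGen p m x a) {S : Submodule (ZMod p) A} (hx : x ∈ S)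
    (hmul : ∀ a ∈ S, ∀ b ∈ S, m a b ∈ S) : a ∈ S := by
  induction h with
  | base => exact hx
  | zero => exact S.zero_mem
  | add _ _ iha ihb => exact S.add_mem iha ihb
  | neg _ iha => exact S.neg_mem iha
  | smul r _ iha => exact S.smul_mem r iha
  | mul _ _ iha ihb => exact hmul _ iha _ ihb

lemma Module.finrank_eq_of_natCard_eq_pow {p n : ℕ} [Fact p.Prime] [Module (ZMod p) A]
    (hcard : Nat.card A = p ^ n) : Module.finrank (ZMod p) A = n := by
  have : Finite A := Nat.finite_of_card_ne_zero (by simp [hcard, Fact.out (p := p.Prime).ne_zero])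
  have : Module.Finite (ZMod p) A := Module.Finite.of_finite
  rw [Module.natCard_eq_pow_finrank (K := ZMod p), Nat.card_zmod] at hcard
  exact Nat.pow_right_injective (Fact.out (p := p.Prime)).two_le hcard

namespace PreLie

variable {p : ℕ} [Module (ZMod p) A] (L : PreLie p A)

def mulₗ : A →ₗ[ZMod p] A →ₗ[ZMod p] A :=
  LinearMap.mk₂ (ZMod p) L.mul L.add_mul L.smul_mul L.mul_add L.mul_smul

lemma mul_mem_span {s : Set A} (hs : ∀ u ∈ s, ∀ v ∈ s, L.mul u v ∈ Submodule.span (ZMod p) s)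
    {a b : A} (ha : a ∈ Submodule.span (ZMod p) s) (hb : b ∈ Submodule.span (ZMod p) s) :
    L.mul a b ∈ Submodule.span (ZMod p) s := by
  have hab : L.mulₗ a b ∈ Submodule.map₂ L.mulₗ (Submodule.span (ZMod p) s)
      (Submodule.span (ZMod p) s) := Submodule.apply_mem_map₂ _ ha hb
  rw [Submodule.map₂_span_span] at hab
  refine Submodule.span_le.mpr ?_ hab
  rintro _ ⟨u, hu, v, hv, rfl⟩
  exact hs u hu v hv

def cubicMonomials (x : A) : Fin 4 → A :=
  ![x, L.mul x x, L.mul (L.mul x x) x, L.mul x (L.mul x x)]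

lemma cubicMonomials_mem_pchain (x : A) (i : Fin 4) :
    L.cubicMonomials x i ∈ pchain p L.mul (![1, 2, 3, 3] i) := by
  have h₁ : IsProd L.mul 1 x := .of x
  have h₂ : IsProd L.mul 2 (L.mul x x) := h₁.mul h₁
  fin_cases i
  exacts [h₁.mem_pchain, h₂.mem_pchain, (h₂.mul h₁).mem_pchain, (h₁.mul h₂).mem_pchain]

lemma mul_cubicMonomials_mem_span (x : A) (h4 : pchain p L.mul 4 = ⊥) (i j : Fin 4) :
    L.mul (L.cubicMonomials x i) (L.cubicMonomials x j) ∈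
      Submodule.span (ZMod p) (Set.range (L.cubicMonomials x)) := by
  by_cases hij : 4 ≤ ![1, 2, 3, 3] i + ![1, 2, 3, 3] j
  · rw [mul_eq_zero_of_pchain_eq_bot h4 (by fin_cases i <;> decide)
      (by fin_cases j <;> decide) hij (L.cubicMonomials_mem_pchain x i)
      (L.cubicMonomials_mem_pchain x j)]
    exact Submodule.zero_mem _
  · fin_cases i <;> fin_cases j <;> simp at hij
    exacts [Submodule.subset_span ⟨1, rfl⟩, Submodule.subset_span ⟨3, rfl⟩,
      Submodule.subset_span ⟨2, rfl⟩]

lemma span_cubicMonomials_eq_top {x : A} (hgen : ∀ a : A, PreLieGen p L.mul x a)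
    (h4 : pchain p L.mul 4 = ⊥) :
    Submodule.span (ZMod p) (Set.range (L.cubicMonomials x)) = ⊤ := by
  refine Submodule.eq_top_iff'.mpr fun a => (hgen a).mem_of_mul_mem
    (Submodule.subset_span ⟨0, rfl⟩) fun _ ha _ hb => L.mul_mem_span ?_ ha hb
  rintro _ ⟨i, rfl⟩ _ ⟨j, rfl⟩
  exact L.mul_cubicMonomials_mem_span x h4 i j

end PreLie

/-- a one-generated pre-Lie algebra over `F_p` of cardinality
`p^4` with `A^4 = 0` has basis `x, x², x²·x, x·x²`, and all products of more
than `3` elements are zero. -/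
theorem oneGenerated_preLie_card_pow_four_A4_zero {p : ℕ} (hp : p.Prime)
    [Module (ZMod p) A] (L : PreLie p A) (x : A)
    (hgen : ∀ a : A, PreLieGen p L.mul x a)
    (hcard : Nat.card A = p ^ 4)
    (h4 : pchain p L.mul 4 = ⊥) :
    (LinearIndependent (ZMod p)
        ![x, L.mul x x, L.mul (L.mul x x) x, L.mul x (L.mul x x)] ∧
      Submodule.span (ZMod p)
        {x, L.mul x x, L.mul (L.mul x x) x, L.mul x (L.mul x x)} = ⊤) ∧
    ∀ m : ℕ, 3 < m → ∀ w : A, IsProd L.mul m w → w = 0 := by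
  have : Fact p.Prime := ⟨hp⟩
  have hspan := L.span_cubicMonomials_eq_top hgen h4
  have hrange : Set.range (L.cubicMonomials x) =
      {x, L.mul x x, L.mul (L.mul x x) x, L.mul x (L.mul x x)} := by
    ext y
    simp only [PreLie.cubicMonomials, Set.mem_range, Fin.exists_fin_succ, Set.mem_insert_iff,
      Set.mem_singleton_iff]
    simp [eq_comm]
  refine ⟨⟨linearIndependent_of_top_le_span_of_card_eq_finrank hspan.ge ?_, hrange ▸ hspan⟩,
    fun m hm w hw => hw.eq_zero_of_pchain_eq_bot h4 hm⟩
  rw [Module.finrank_eq_of_natCard_eq_pow hcard, Fintype.card_fin]
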